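/- Let p_β(t,x,y) = (1/√(2πt))exp(-(x-y)²/(2t)) + β·sgn(y)·(1/√(2πt))exp(-(|x|+|y|)²/(2t)) be the transition density of the skew Brownian motion with parameter β ∈ [-1,1]. Then for every β, p_β satisfies the Chapman–Kolmogorov equation: ∫_ℝ p_β(s,x,z) p_β(t,z,y) dz = p_β(s+t,x,y) for all s,t > 0 and x,y ∈ ℝ. -/

import Mathlib

/-!
With `g_t = heatKernel t` the centred Gaussian density of variance `t`,
`p_β(t, x, y) = g_t(x - y) + β sgn(y) g_t(|x| + |y|)`.
The integrand `P(z) = p_β(s, x, z) p_β(t, z, y)` is not itself a sum of Gaussian convolutions,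
but its symmetrisation `P(z) + P(-z)` agrees with that of
`Q(z) = g_s(x - z) g_t(z - y) + β sgn(y) g_s(|x| - z) g_t(z + |y|)`:
the `β²` term is odd in `z`, and the reflection `z ↦ -z` turns the remaining skew terms into
the convolution of `g_s` and `g_t` between the points `|x|` and `-|y|`.
Hence `∫ P = ∫ Q`, and the Chapman–Kolmogorov equation of the Gaussian kernel finishes the proof.
-/

open MeasureTheory Set

/-- Transition density of the skew Brownian motion with parameter `β`. -/
noncomputable def skewDensity (β t x y : ℝ) : ℝ :=
  (1 / Real.sqrt (2 * Real.pi * t)) * Real.exp (-(x - y) ^ 2 / (2 * t))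
    + β * Real.sign y * ((1 / Real.sqrt (2 * Real.pi * t)) * Real.exp (-(|x| + |y|) ^ 2 / (2 * t)))

@[fun_prop]
theorem Real.measurable_sign : Measurable Real.sign :=
  Measurable.ite measurableSet_Iio measurable_const
    (Measurable.ite measurableSet_Ioi measurable_const measurable_const)

theorem Real.abs_sign_le_one (r : ℝ) : |Real.sign r| ≤ 1 := by
  rcases Real.sign_apply_eq r with h | h | h <;> simp [h]

theorem integral_eq_of_add_comp_neg_eq {f g : ℝ → ℝ} (hf : Integrable f) (hg : Integrable g)
    (h : ∀ z, f z + f (-z) = g z + g (-z)) : ∫ z, f z = ∫ z, g z := by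
  have two_mul_integral : ∀ {φ : ℝ → ℝ}, Integrable φ → ∫ z, (φ z + φ (-z)) = 2 * ∫ z, φ z :=
    fun hφ => by rw [integral_add hφ hφ.comp_neg, integral_neg_eq_self]; ring
  have := two_mul_integral hf
  rw [funext h, two_mul_integral hg] at this
  linarith

noncomputable def heatKernel (t u : ℝ) : ℝ :=
  (1 / Real.sqrt (2 * Real.pi * t)) * Real.exp (-u ^ 2 / (2 * t))

theorem heatKernel_nonneg (t u : ℝ) : 0 ≤ heatKernel t u := by
  unfold heatKernel; positivity

theorem heatKernel_le_of_sq_le {t u v : ℝ} (ht : 0 ≤ t) (h : u ^ 2 ≤ v ^ 2) :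
    heatKernel t v ≤ heatKernel t u := by
  unfold heatKernel; gcongr

theorem heatKernel_le_heatKernel_zero {t : ℝ} (ht : 0 ≤ t) (u : ℝ) :
    heatKernel t u ≤ heatKernel t 0 :=
  heatKernel_le_of_sq_le ht (by simpa using sq_nonneg u)

theorem continuous_heatKernel (t : ℝ) : Continuous (heatKernel t) := by
  unfold heatKernel; fun_prop

theorem integrable_heatKernel_sub {t : ℝ} (ht : 0 < t) (c : ℝ) :
    Integrable fun z => heatKernel t (z - c) := by
  have h : heatKernel t
      = fun u => 1 / Real.sqrt (2 * Real.pi * t) * Real.exp (-(2 * t)⁻¹ * u ^ 2) := by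
    funext u; rw [heatKernel, neg_mul, ← div_eq_inv_mul, neg_div]
  rw [h]
  exact ((integrable_exp_neg_mul_sq (by positivity)).const_mul _).comp_sub_right c

theorem integrable_heatKernel_mul_heatKernel {s t : ℝ} (hs : 0 ≤ s) (ht : 0 < t) (x y : ℝ) :
    Integrable fun z => heatKernel s (x - z) * heatKernel t (z - y) :=
  (integrable_heatKernel_sub ht y).bdd_mul
    ((continuous_heatKernel s).comp (continuous_sub_left x)).aestronglyMeasurable
    (.of_forall fun z => by
      rw [Real.norm_of_nonneg (heatKernel_nonneg _ _)]
      exact heatKernel_le_heatKernel_zero hs _)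

theorem integral_heatKernel_mul_heatKernel {s t : ℝ} (hs : 0 < s) (ht : 0 < t) (x y : ℝ) :
    ∫ z, heatKernel s (x - z) * heatKernel t (z - y) = heatKernel (s + t) (x - y) := by
  set k := (s + t) / (2 * s * t)
  set m := (t * x + s * y) / (s + t)
  set C := 1 / Real.sqrt (2 * Real.pi * s) * (1 / Real.sqrt (2 * Real.pi * t))
  have complete_square : ∀ z, -(x - z) ^ 2 / (2 * s) + -(z - y) ^ 2 / (2 * t)
      = -(x - y) ^ 2 / (2 * (s + t)) + -k * (z - m) ^ 2 := fun z => by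
    simp only [k, m]; field_simp; ring
  have normalisation : C * Real.sqrt (Real.pi / k) = 1 / Real.sqrt (2 * Real.pi * (s + t)) := by
    simp only [C, k, one_div, ← Real.sqrt_inv]
    rw [← Real.sqrt_mul (by positivity), ← Real.sqrt_mul (by positivity)]
    congr 1; field_simp
  calc ∫ z, heatKernel s (x - z) * heatKernel t (z - y)
      = ∫ z, C * Real.exp (-(x - y) ^ 2 / (2 * (s + t))) * Real.exp (-k * (z - m) ^ 2) := by
        congr 1; funext z
        rw [heatKernel, heatKernel, mul_mul_mul_comm, ← Real.exp_add, complete_square,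
          Real.exp_add]
        ring
    _ = C * Real.exp (-(x - y) ^ 2 / (2 * (s + t))) * Real.sqrt (Real.pi / k) := by
        rw [integral_const_mul, integral_sub_right_eq_self (fun z => Real.exp (-k * z ^ 2)),
          integral_gaussian]
    _ = heatKernel (s + t) (x - y) := by
        rw [heatKernel, ← normalisation]; ring

theorem skewDensity_eq (β t x y : ℝ) :
    skewDensity β t x y = heatKernel t (x - y) + β * Real.sign y * heatKernel t (|x| + |y|) :=
  rfl

theorem measurable_skewDensity (β t : ℝ) :
    Measurable fun p : ℝ × ℝ => skewDensity β t p.1 p.2 := by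
  unfold skewDensity; fun_prop

theorem abs_skewDensity_le {t : ℝ} (ht : 0 ≤ t) (β x y : ℝ) :
    |skewDensity β t x y| ≤ (1 + |β|) * heatKernel t (x - y) := by
  have hg := heatKernel_nonneg t (|x| + |y|)
  have hle : heatKernel t (|x| + |y|) ≤ heatKernel t (x - y) :=
    heatKernel_le_of_sq_le ht (sq_le_sq.mpr ((abs_sub x y).trans (le_abs_self _)))
  calc |skewDensity β t x y|
      ≤ |heatKernel t (x - y)| + |β * Real.sign y * heatKernel t (|x| + |y|)| := abs_add_le _ _
    _ = heatKernel t (x - y) + |β| * |Real.sign y| * heatKernel t (|x| + |y|) := by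
        rw [abs_mul, abs_mul, abs_of_nonneg hg, abs_of_nonneg (heatKernel_nonneg _ _)]
    _ ≤ (1 + |β|) * heatKernel t (x - y) := by
        have := mul_le_mul (Real.abs_sign_le_one y) hle hg zero_le_one
        nlinarith [abs_nonneg β, abs_nonneg (Real.sign y)]

theorem integrable_skewDensity_mul_skewDensity {s t : ℝ} (hs : 0 < s) (ht : 0 < t)
    (β x y : ℝ) : Integrable fun z => skewDensity β s x z * skewDensity β t z y := by
  have hright : Integrable fun z => skewDensity β t z y :=
    ((integrable_heatKernel_sub ht y).const_mul (1 + |β|)).mono'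
      ((measurable_skewDensity β t).comp measurable_prodMk_right).aestronglyMeasurable
      (.of_forall fun z => abs_skewDensity_le ht.le β z y)
  exact hright.bdd_mul (c := (1 + |β|) * heatKernel s 0)
    ((measurable_skewDensity β s).comp measurable_prodMk_left).aestronglyMeasurable
    (.of_forall fun z => (abs_skewDensity_le hs.le β x z).trans
      (mul_le_mul_of_nonneg_left (heatKernel_le_heatKernel_zero hs.le _) (by positivity)))

theorem skewDensity_mul_skewDensity_add_comp_neg (β s t x y z : ℝ) :
    skewDensity β s x z * skewDensity β t z y + skewDensity β s x (-z) * skewDensity β t (-z) y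
      = heatKernel s (x - z) * heatKernel t (z - y)
          + β * Real.sign y * (heatKernel s (|x| - z) * heatKernel t (z - -|y|))
        + (heatKernel s (x - -z) * heatKernel t (-z - y)
          + β * Real.sign y * (heatKernel s (|x| - -z) * heatKernel t (-z - -|y|))) := by
  simp only [skewDensity_eq, abs_neg, Real.sign_neg]
  rcases abs_cases x with ⟨hx, -⟩ | ⟨hx, -⟩ <;>
  rcases lt_trichotomy y 0 with hy | rfl | hy <;>
  rcases lt_trichotomy z 0 with hz | rfl | hz <;>
  simp only [abs_of_neg, abs_of_pos, Real.sign_of_neg, Real.sign_of_pos, abs_zero,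
    Real.sign_zero, heatKernel, *] <;>
  ring_nf

theorem skewDensity_chapman_kolmogorov_general (β : ℝ)
    (s t : ℝ) (hs : 0 < s) (ht : 0 < t) (x y : ℝ) :
    (∫ z : ℝ, skewDensity β s x z * skewDensity β t z y) = skewDensity β (s + t) x y := by
  have hG := integrable_heatKernel_mul_heatKernel hs.le ht x y
  have hG' := (integrable_heatKernel_mul_heatKernel hs.le ht |x| (-|y|)).const_mul
    (β * Real.sign y)
  rw [integral_eq_of_add_comp_neg_eq (integrable_skewDensity_mul_skewDensity hs ht β x y)
      (by exact hG.add hG') (skewDensity_mul_skewDensity_add_comp_neg β s t x y),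
    integral_add hG hG', integral_const_mul, integral_heatKernel_mul_heatKernel hs ht,
    integral_heatKernel_mul_heatKernel hs ht, sub_neg_eq_add, skewDensity_eq]

/-- Chapman–Kolmogorov equation for the skew Brownian motion density:
`∫_ℝ p_β(s,x,z) p_β(t,z,y) dz = p_β(s+t,x,y)` for all `s, t > 0`. -/
theorem skewDensity_chapman_kolmogorov (β : ℝ) (hβ : β ∈ Set.Icc (-1 : ℝ) 1)
    (s t : ℝ) (hs : 0 < s) (ht : 0 < t) (x y : ℝ) :
    (∫ z : ℝ, skewDensity β s x z * skewDensity β t z y) = skewDensity β (s + t) x y :=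
  skewDensity_chapman_kolmogorov_general β s t hs ht x y
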